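/- arXiv:2112.10426 — 2 statements merged into one kernel-verified Lean document; each statement's English description precedes it below -/
import Mathlib

section
/- For every integer d ≥ 2, the domination number of the undirected Kautz graph of dimension 2 over a d-letter alphabet satisfies γ(cDB(d,2,2)) = d − 1. -/
/-- A sequence `x` of length `n` over the alphabet `Fin d` is `t`-constrained if
equal symbols occur at positions at distance at least `t`. -/
def dbConstrained (d t n : ℕ) (x : Fin n → Fin d) : Prop :=
  ∀ i j : Fin n, i < j → x i = x j → t ≤ (j : ℕ) - (i : ℕ)

/-- The vertex set `V(d,t,n)` of the `t`-constrained de Bruijn graph: all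
`t`-constrained sequences of length `n` over a `d`-letter alphabet. -/
abbrev dbVtx (d t n : ℕ) : Type := {x : Fin n → Fin d // dbConstrained d t n x}

/-- `dbShift x y` holds when there is a directed de Bruijn edge from `x` to `y`,
i.e. `y` is obtained from `x` by deleting its first symbol and appending a new
last symbol. -/
def dbShift {d t n : ℕ} (x y : dbVtx d t n) : Prop :=
  ∀ (i : Fin n) (h : (i : ℕ) + 1 < n), y.val i = x.val ⟨(i : ℕ) + 1, h⟩

/-- `S` is a dominating set of the directed `t`-constrained de Bruijn graph
`cDB⁺(d,t,n)`: every vertex is dominated by (equal to, or an out-neighbor of)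
some element of `S`. -/
def dbDirDominating {d t n : ℕ} (S : Set (dbVtx d t n)) : Prop :=
  ∀ v : dbVtx d t n, ∃ s ∈ S, s = v ∨ dbShift s v

/-- The domination number `γ(cDB⁺(d,t,n))` of the directed `t`-constrained
de Bruijn graph. -/
noncomputable def gammaDir (d t n : ℕ) : ℕ :=
  sInf {k | ∃ S : Set (dbVtx d t n), S.Finite ∧ S.ncard = k ∧ dbDirDominating S}

/-- Adjacency in the undirected `t`-constrained de Bruijn graph `cDB(d,t,n)`:
edge directions are ignored and loops are removed. -/
def dbAdj {d t n : ℕ} (x y : dbVtx d t n) : Prop :=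
  x ≠ y ∧ (dbShift x y ∨ dbShift y x)

/-- `S` is a dominating set of the undirected graph `cDB(d,t,n)`: every vertex
is dominated by (equal to, or adjacent to) some element of `S`. -/
def dbUndirDominating {d t n : ℕ} (S : Set (dbVtx d t n)) : Prop :=
  ∀ v : dbVtx d t n, ∃ s ∈ S, s = v ∨ dbAdj s v

/-- The domination number `γ(cDB(d,t,n))` of the undirected `t`-constrained
de Bruijn graph. -/
noncomputable def gammaUndir (d t n : ℕ) : ℕ :=
  sInf {k | ∃ S : Set (dbVtx d t n), S.Finite ∧ S.ncard = k ∧ dbUndirDominating S}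


section KautzAux

variable {d : ℕ}

/-- In a `2`-constrained word of length `2`, the two symbols differ. -/
lemma dbVtx_ne (v : dbVtx d 2 2) : v.val 0 ≠ v.val 1 := by
  intro h
  have h2 := v.prop 0 1 (by decide) h
  simp at h2

lemma dbShift_iff (s v : dbVtx d 2 2) : dbShift s v ↔ v.val 0 = s.val 1 := by
  constructor
  · intro h
    have := h 0 (by norm_num)
    simpa using this
  · intro h i hi
    have hiv : (i : ℕ) = 0 := by omega
    have hi0 : i = 0 := by
      apply Fin.ext; simpa using hiv
    subst hi0
    have h1 : (⟨(0 : Fin 2).val + 1, hi⟩ : Fin 2) = 1 := by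
      apply Fin.ext; simp
    rw [h1]
    exact h

/-- The vertex of `cDB(d,2,2)` with coordinates `x ≠ y`. -/
def mkV (x y : Fin d) (h : x ≠ y) : dbVtx d 2 2 :=
  ⟨![x, y], by
    intro i j hij heq
    have h1 : (i : ℕ) < (j : ℕ) := hij
    have h2 : (j : ℕ) < 2 := j.isLt
    have hi0 : i = 0 := by apply Fin.ext; simp; omega
    have hj1 : j = 1 := by apply Fin.ext; simp; omega
    subst hi0; subst hj1
    simp at heq
    exact absurd heq h⟩

@[simp] lemma mkV_zero (x y : Fin d) (h : x ≠ y) : (mkV x y h).val 0 = x := rfl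

@[simp] lemma mkV_one (x y : Fin d) (h : x ≠ y) : (mkV x y h).val 1 = y := rfl

lemma kautz_upper (d : ℕ) (hd : 2 ≤ d) :
    ∃ S : Set (dbVtx d 2 2), S.Finite ∧ S.ncard = d - 1 ∧ dbUndirDominating S := by
  haveI : NeZero d := ⟨by omega⟩
  refine ⟨{v | v.val 1 = 0}, Set.toFinite _, ?_, ?_⟩
  · have e : {v : dbVtx d 2 2 | v.val 1 = 0} ≃ {c : Fin d // ¬ c = 0} :=
      { toFun := fun v => ⟨v.1.val 0, by
          have := dbVtx_ne v.1
          rw [v.2] at this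
          exact this⟩
        invFun := fun c => ⟨mkV c.1 0 c.2, by simp⟩
        left_inv := by
          rintro ⟨v, hv⟩
          apply Subtype.ext
          apply Subtype.ext
          funext i
          fin_cases i
          · simp [mkV]
          · simpa [mkV] using hv.symm
        right_inv := by
          rintro ⟨c, hc⟩
          simp }
    rw [← Nat.card_coe_set_eq, Nat.card_congr e, Nat.card_eq_fintype_card,
      Fintype.card_subtype_compl, Fintype.card_subtype_eq, Fintype.card_fin]
  · intro v
    by_cases h : v.val 1 = 0
    · exact ⟨v, h, Or.inl rfl⟩
    · refine ⟨mkV (v.val 1) 0 h, by simp, Or.inr ⟨?_, Or.inr ?_⟩⟩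
      · intro he
        apply h
        rw [← he]
        simp
      · rw [dbShift_iff]
        simp

lemma kautz_lower (d : ℕ) (hd : 2 ≤ d) (S : Set (dbVtx d 2 2)) (hfin : S.Finite)
    (hdom : dbUndirDominating S) : d - 1 ≤ S.ncard := by
  by_contra hcon
  push_neg at hcon
  set k := S.ncard with hk
  have hkd : k + 2 ≤ d := by omega
  classical
  set F := hfin.toFinset with hF
  have hFcard : F.card = k := (Set.ncard_eq_toFinset_card S hfin).symm
  set A := F.image (fun s => s.val 0) with hA
  set B := F.image (fun s => s.val 1) with hB
  have hak : A.card ≤ k := hFcard ▸ Finset.card_image_le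
  have hbk : B.card ≤ k := hFcard ▸ Finset.card_image_le
  set X := (Finset.univ : Finset (Fin d)) \ B with hX
  set Y := (Finset.univ : Finset (Fin d)) \ A with hY
  have hXcard : X.card = d - B.card := by
    rw [hX, Finset.card_sdiff_of_subset (Finset.subset_univ _)]
    simp
  have hYcard : Y.card = d - A.card := by
    rw [hY, Finset.card_sdiff_of_subset (Finset.subset_univ _)]
    simp
  have hX2 : 2 ≤ X.card := by omega
  have hY2 : 2 ≤ Y.card := by omega
  have key : ∀ (x y : Fin d) (h : x ≠ y), x ∈ X → y ∈ Y → mkV x y h ∈ F := by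
    intro x y hxy hx hy
    obtain ⟨s, hsS, hcase⟩ := hdom (mkV x y hxy)
    have hsF : s ∈ F := by simpa [hF] using hsS
    rcases hcase with rfl | ⟨hne, hsh | hsh⟩
    · exact hsF
    · exfalso
      rw [dbShift_iff] at hsh
      apply (Finset.mem_sdiff.mp hx).2
      rw [hB]
      refine Finset.mem_image.mpr ⟨s, hsF, ?_⟩
      simpa using hsh.symm
    · exfalso
      rw [dbShift_iff] at hsh
      apply (Finset.mem_sdiff.mp hy).2
      rw [hA]
      refine Finset.mem_image.mpr ⟨s, hsF, ?_⟩
      simpa using hsh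
  have hXA : X ⊆ A := by
    intro x hx
    have hcard : 1 ≤ (Y.erase x).card := by
      have := Finset.pred_card_le_card_erase (a := x) (s := Y)
      omega
    obtain ⟨y, hy⟩ := Finset.card_pos.mp (show 0 < (Y.erase x).card by omega)
    have hyY : y ∈ Y := Finset.mem_of_mem_erase hy
    have hyx : x ≠ y := fun h => (Finset.ne_of_mem_erase hy) h.symm
    have hmem := key x y hyx hx hyY
    rw [hA]
    exact Finset.mem_image.mpr ⟨mkV x y hyx, hmem, rfl⟩
  set F1 := F.filter (fun s => s.val 0 ∈ X) with hF1
  set F2 := F.filter (fun s => ¬ s.val 0 ∈ X) with hF2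
  have hsplit : F1.card + F2.card = k := by
    rw [hF1, hF2, Finset.card_filter_add_card_filter_not]
    exact hFcard
  have h1 : X.card * Y.card ≤ F1.card := by
    have hsub : X ×ˢ Y ⊆ F1.image (fun s => (s.val 0, s.val 1)) := by
      intro p hp
      obtain ⟨hp1, hp2⟩ := Finset.mem_product.mp hp
      have hne : p.1 ≠ p.2 := by
        intro h
        exact (Finset.mem_sdiff.mp hp2).2 (h ▸ hXA hp1)
      refine Finset.mem_image.mpr ⟨mkV p.1 p.2 hne, ?_, by simp⟩
      rw [hF1]
      exact Finset.mem_filter.mpr ⟨key p.1 p.2 hne hp1 hp2, by simpa using hp1⟩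
    calc X.card * Y.card = (X ×ˢ Y).card := (Finset.card_product X Y).symm
      _ ≤ (F1.image (fun s => (s.val 0, s.val 1))).card := Finset.card_le_card hsub
      _ ≤ F1.card := Finset.card_image_le
  have h2 : (A \ X).card ≤ F2.card := by
    have hsub : A \ X ⊆ F2.image (fun s => s.val 0) := by
      intro a ha
      obtain ⟨haA, haX⟩ := Finset.mem_sdiff.mp ha
      obtain ⟨s, hsF, hs0⟩ := Finset.mem_image.mp (hA ▸ haA)
      refine Finset.mem_image.mpr ⟨s, ?_, hs0⟩
      rw [hF2]
      exact Finset.mem_filter.mpr ⟨hsF, by rw [hs0]; exact haX⟩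
    calc (A \ X).card ≤ (F2.image (fun s => s.val 0)).card := Finset.card_le_card hsub
      _ ≤ F2.card := Finset.card_image_le
  have h4 : A.card ≤ (A \ X).card + X.card := by
    calc A.card ≤ ((A \ X) ∪ X).card := by
          apply Finset.card_le_card
          intro a ha
          by_cases h : a ∈ X
          · exact Finset.mem_union_right _ h
          · exact Finset.mem_union_left _ (Finset.mem_sdiff.mpr ⟨ha, h⟩)
      _ ≤ (A \ X).card + X.card := Finset.card_union_le _ _
  have hpq : X.card + 2 * Y.card ≤ X.card * Y.card + 2 := by nlinarith [hX2, hY2]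
  have h1' : X.card + 2 * Y.card ≤ F1.card + 2 := by omega
  omega


end KautzAux

/-- `γ(cDB(d,2,2)) = d - 1`. -/
theorem gammaUndir_kautz_two (d : ℕ) (hd : 2 ≤ d) :
    gammaUndir d 2 2 = d - 1 := by
  have hlow : ∀ m ∈ {k | ∃ S : Set (dbVtx d 2 2), S.Finite ∧ S.ncard = k ∧ dbUndirDominating S},
      d - 1 ≤ m := by
    rintro m ⟨S, hfin, rfl, hdom⟩
    exact kautz_lower d hd S hfin hdom
  obtain ⟨S, h1, h2, h3⟩ := kautz_upper d hd
  have hmem : d - 1 ∈ {k | ∃ S : Set (dbVtx d 2 2), S.Finite ∧ S.ncard = k ∧ dbUndirDominating S} :=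
    ⟨S, h1, h2, h3⟩
  exact le_antisymm (Nat.sInf_le hmem) (le_csInf ⟨_, hmem⟩ hlow)
end

section
/- For all integers d ≥ 3 and n ≥ 4 with d even, the domination number of the directed 3-constrained de Bruijn graph satisfies γ(cDB⁺(d,3,n)) = d · (d−2)^{n−2}. -/
/-!
Each vertex of `cDB⁺(d,3,n)`, `n ≥ 3`, dominates at most `d - 1` vertices: itself and the
out-neighbours, which are determined by their last letter, a letter different from the last two
letters of the vertex. Since `|V(d,3,n)| = d (d-1) (d-2)^(n-2)`, every dominating set has at least
`d (d-2)^(n-2)` elements. For even `d` fix a fixed-point-free involution `σ` of the alphabet. The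
words with `x₁ = σ x₀` number exactly `d (d-2)^(n-2)` and dominate: a word `x` with `x₁ ≠ σ x₀` is
an out-neighbour of `σ x₀, x₀, …, x_{n-2}`, which lies in the set because `σ` is an involution.
-/

open Finset Function

section Constrained

variable {d t k : ℕ}

theorem dbConstrained_snoc_iff (y : Fin k → Fin d) (a : Fin d) :
    dbConstrained d t (k + 1) (Fin.snoc y a) ↔
      dbConstrained d t k y ∧ ∀ i : Fin k, k - i < t → y i ≠ a := by
  constructor
  · intro h
    refine ⟨fun i j hij hy => ?_, fun i hi hya => ?_⟩
    · simpa using h i.castSucc j.castSucc (by simpa using hij) (by simpa using hy)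
    · have := h i.castSucc (Fin.last k) (Fin.castSucc_lt_last i) (by simpa using hya)
      simp only [Fin.val_castSucc, Fin.val_last] at this
      omega
  · rintro ⟨hy, ha⟩ i j hij hx
    induction j using Fin.lastCases with
    | last =>
      induction i using Fin.lastCases with
      | last => exact absurd hij (lt_irrefl _)
      | cast i =>
        simp only [Fin.snoc_castSucc, Fin.snoc_last] at hx
        by_contra h
        exact ha i (by simp only [Fin.val_castSucc, Fin.val_last] at h; omega) hx
    | cast j =>
      induction i using Fin.lastCases with
      | last => exact absurd hij (not_lt.2 (Fin.le_last _))
      | cast i => simpa using hy i j (by simpa using hij) (by simpa using hx)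

theorem dbConstrained_cons_iff (b : Fin d) (y : Fin k → Fin d) :
    dbConstrained d t (k + 1) (Fin.cons b y) ↔
      dbConstrained d t k y ∧ ∀ j : Fin k, (j : ℕ) + 1 < t → b ≠ y j := by
  constructor
  · intro h
    refine ⟨fun i j hij hy => ?_, fun j hj hby => ?_⟩
    · simpa using h i.succ j.succ (by simpa using hij) (by simpa using hy)
    · have := h 0 j.succ (Fin.succ_pos j) (by simpa using hby)
      simp only [Fin.val_succ, Fin.val_zero] at this
      omega
  · rintro ⟨hy, hb⟩ i j hij hx
    induction i using Fin.cases with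
    | zero =>
      induction j using Fin.cases with
      | zero => exact absurd hij (lt_irrefl _)
      | succ j =>
        simp only [Fin.cons_zero, Fin.cons_succ] at hx
        by_contra h
        exact hb j (by simp only [Fin.val_succ, Fin.val_zero] at h; omega) hx
    | succ i =>
      induction j using Fin.cases with
      | zero => exact absurd hij (not_lt.2 (Fin.zero_le _))
      | succ j => simpa using hy i j (by simpa using hij) (by simpa using hx)

theorem dbConstrained.init {x : Fin (k + 1) → Fin d} (hx : dbConstrained d t (k + 1) x) :
    dbConstrained d t k (Fin.init x) :=
  ((dbConstrained_snoc_iff (Fin.init x) (x (Fin.last k))).1 (by rwa [Fin.snoc_init_self])).1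

theorem dbConstrained.ne_of_sub_lt {n : ℕ} {x : Fin n → Fin d} (hx : dbConstrained d t n x)
    {i j : Fin n} (hij : i < j) (h : (j : ℕ) - i < t) : x i ≠ x j :=
  fun he => (hx i j hij he).not_gt h

theorem dbConstrained_two_iff (ht : 2 ≤ t) {x : Fin 2 → Fin d} :
    dbConstrained d t 2 x ↔ x 0 ≠ x 1 := by
  refine ⟨fun h he => ?_, fun h i j hij he => ?_⟩
  · have := h 0 1 Fin.zero_lt_one he
    simp only [Fin.val_one, Fin.val_zero] at this
    omega
  · fin_cases i <;> fin_cases j <;> simp_all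

end Constrained

section Counting

variable {d : ℕ}

theorem dbConstrained_three_snoc_iff {m : ℕ} (y : Fin (m + 2) → Fin d) (a : Fin d) :
    dbConstrained d 3 (m + 3) (Fin.snoc y a) ↔
      dbConstrained d 3 (m + 2) y ∧
        a ∉ ({y ⟨m, by omega⟩, y ⟨m + 1, by omega⟩} : Finset (Fin d)) := by
  rw [dbConstrained_snoc_iff]
  refine and_congr_right fun _ => ⟨fun h => ?_, fun h i hi => ?_⟩
  · simp only [mem_insert, mem_singleton, not_or]
    exact ⟨(h _ (by simp)).symm, (h _ (by simp)).symm⟩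
  · simp only [mem_insert, mem_singleton, not_or] at h
    obtain hi | hi : i = ⟨m, by omega⟩ ∨ i = ⟨m + 1, by omega⟩ := by
      simp only [Fin.ext_iff]; omega
    exacts [hi ▸ Ne.symm h.1, hi ▸ Ne.symm h.2]

theorem card_notMem_pair {u v : Fin d} (h : u ≠ v) :
    Nat.card {a // a ∉ ({u, v} : Finset (Fin d))} = d - 2 := by
  rw [Nat.card_eq_fintype_card, Fintype.card_subtype_compl, Fintype.card_coe, card_pair h,
    Fintype.card_fin]

def dbSnocEquiv (P : Fin d → Fin d → Prop) (m : ℕ) :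
    {v : dbVtx d 3 (m + 3) // P (v.1 0) (v.1 1)} ≃
      Σ w : {v : dbVtx d 3 (m + 2) // P (v.1 0) (v.1 1)},
        {a // a ∉ ({w.1.1 ⟨m, by omega⟩, w.1.1 ⟨m + 1, by omega⟩} : Finset (Fin d))} where
  toFun v :=
    have h := (dbConstrained_three_snoc_iff (Fin.init v.1.1) (v.1.1 (Fin.last _))).1
      (by rw [Fin.snoc_init_self]; exact v.1.2)
    ⟨⟨⟨Fin.init v.1.1, h.1⟩, v.2⟩, ⟨_, h.2⟩⟩
  invFun w := ⟨⟨Fin.snoc w.1.1.1 w.2.1, (dbConstrained_three_snoc_iff _ _).2 ⟨w.1.1.2, w.2.2⟩⟩,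
    w.1.2⟩
  left_inv v := Subtype.ext (Subtype.ext (Fin.snoc_init_self _))
  right_inv w := Sigma.subtype_ext
    (Subtype.ext (Subtype.ext (Fin.init_snoc (α := fun _ => Fin d) _ _)))
    (Fin.snoc_last (α := fun _ => Fin d) _ _)

theorem card_dbVtx_three_prefix (P : Fin d → Fin d → Prop) (m : ℕ) :
    Nat.card {v : dbVtx d 3 (m + 2) // P (v.1 0) (v.1 1)} =
      Nat.card {p : Fin d × Fin d // p.1 ≠ p.2 ∧ P p.1 p.2} * (d - 2) ^ m := by
  induction m with
  | zero =>
    rw [pow_zero, mul_one]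
    exact Nat.card_congr
      { toFun v := ⟨(v.1.1 0, v.1.1 1), (dbConstrained_two_iff (by norm_num)).1 v.1.2, v.2⟩
        invFun p := ⟨⟨![p.1.1, p.1.2], (dbConstrained_two_iff (by norm_num)).2 p.2.1⟩, p.2.2⟩
        left_inv v := Subtype.ext (Subtype.ext (funext (Fin.forall_fin_two.2 ⟨rfl, rfl⟩)))
        right_inv p := rfl }
  | succ m ih =>
    classical
    rw [Nat.card_congr (dbSnocEquiv P m), Nat.card_sigma,
      Finset.sum_congr rfl fun w _ => card_notMem_pair (w.1.2.ne_of_sub_lt (by simp) (by simp)),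
      sum_const, card_univ, ← Nat.card_eq_fintype_card, ih, smul_eq_mul, pow_succ, mul_assoc]

theorem card_dbVtx_three (m : ℕ) : Nat.card (dbVtx d 3 (m + 2)) = d * (d - 1) * (d - 2) ^ m := by
  classical
  have h := card_dbVtx_three_prefix (fun _ _ : Fin d => True) m
  rw [Nat.card_congr (Equiv.subtypeUnivEquiv fun _ => trivial)] at h
  have hoff : (univ.filter fun p : Fin d × Fin d => p.1 ≠ p.2 ∧ True) =
      (univ : Finset (Fin d)).offDiag := by
    ext; simp
  rw [h, Nat.card_eq_fintype_card, Fintype.card_subtype, hoff, offDiag_card, card_univ,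
    Fintype.card_fin, ← Nat.mul_sub_one]

theorem ncard_setOf_snd_eq {σ : Fin d → Fin d} (hσ : ∀ a, σ a ≠ a) (m : ℕ) :
    {v : dbVtx d 3 (m + 2) | v.1 1 = σ (v.1 0)}.ncard = d * (d - 2) ^ m := by
  rw [← Nat.card_coe_set_eq]
  refine (card_dbVtx_three_prefix (fun a b => b = σ a) m).trans ?_
  rw [Nat.card_congr (β := Fin d)
    { toFun p := p.1.1
      invFun a := ⟨(a, σ a), (hσ a).symm, rfl⟩
      left_inv p := Subtype.ext (Prod.ext rfl p.2.2.symm)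
      right_inv a := rfl }, Nat.card_eq_fintype_card, Fintype.card_fin]

end Counting

theorem card_le_ncard_mul_of_covers {α : Type*} [Finite α] (N : α → Set α) {S : Set α}
    (hS : ∀ v, ∃ s ∈ S, v ∈ N s) {k : ℕ} (hk : ∀ s, (N s).ncard ≤ k) :
    Nat.card α ≤ S.ncard * k := by
  have hfin := S.toFinite
  have hcover : (⋃ s ∈ hfin.toFinset, N s) = Set.univ :=
    Set.eq_univ_of_forall fun v => by simpa using hS v
  calc Nat.card α = (⋃ s ∈ hfin.toFinset, N s).ncard := by rw [hcover, Set.ncard_univ]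
    _ ≤ ∑ s ∈ hfin.toFinset, (N s).ncard := hfin.toFinset.set_ncard_biUnion_le N
    _ ≤ #hfin.toFinset * k := sum_le_card_nsmul _ _ _ fun s _ => hk s
    _ = S.ncard * k := by rw [Set.ncard_eq_toFinset_card S hfin]

section Neighbourhood

variable {d m : ℕ}

theorem dbShift.eq_of_last_eq {t : ℕ} {s v w : dbVtx d t (m + 1)} (hv : dbShift s v)
    (hw : dbShift s w) (h : v.1 (Fin.last m) = w.1 (Fin.last m)) : v = w := by
  refine Subtype.ext (funext fun i => ?_)
  by_cases hi : (i : ℕ) + 1 < m + 1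
  · rw [hv i hi, hw i hi]
  · rwa [show i = Fin.last m from Fin.ext (by simp only [Fin.val_last]; omega)]

theorem dbShift.last_notMem {s v : dbVtx d 3 (m + 3)} (h : dbShift s v) :
    v.1 (Fin.last _) ∉ ({s.1 ⟨m + 1, by omega⟩, s.1 ⟨m + 2, by omega⟩} : Finset (Fin d)) := by
  rw [← h ⟨m, by omega⟩ (by simp), ← h ⟨m + 1, by omega⟩ (by simp)]
  simp only [mem_insert, mem_singleton, not_or]
  exact ⟨(v.2.ne_of_sub_lt (by simp [Fin.lt_def]) (by simp)).symm,
    (v.2.ne_of_sub_lt (by simp [Fin.lt_def]) (by simp)).symm⟩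

theorem ncard_setOf_dbShift_le (s : dbVtx d 3 (m + 3)) : {v | dbShift s v}.ncard ≤ d - 2 := by
  have hne := s.2.ne_of_sub_lt (i := ⟨m + 1, by omega⟩) (j := ⟨m + 2, by omega⟩)
    (by simp [Fin.lt_def]) (by simp)
  calc {v | dbShift s v}.ncard
      ≤ {a | a ∉ ({s.1 ⟨m + 1, by omega⟩, s.1 ⟨m + 2, by omega⟩} : Finset (Fin d))}.ncard :=
        Set.ncard_le_ncard_of_injOn (fun v => v.1 (Fin.last _)) (fun _ hv => hv.last_notMem)
          (fun _ hv _ hw h => hv.eq_of_last_eq hw h) (Set.toFinite _)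
    _ = d - 2 := by rw [← Nat.card_coe_set_eq]; exact card_notMem_pair hne

theorem ncard_setOf_eq_or_dbShift_le (s : dbVtx d 3 (m + 3)) :
    {v | s = v ∨ dbShift s v}.ncard ≤ d - 1 := by
  have hne := s.2.ne_of_sub_lt (i := 0) (j := 1) (by simp) (by simp)
  have hd : 2 ≤ d := by
    by_contra hd
    exact hne (Fin.ext (by omega))
  calc {v | s = v ∨ dbShift s v}.ncard = (insert s {v | dbShift s v}).ncard := by
        simp only [Set.insert_def, eq_comm (b := s)]; rfl
    _ ≤ {v | dbShift s v}.ncard + 1 := Set.ncard_insert_le _ _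
    _ ≤ d - 1 := by have := ncard_setOf_dbShift_le s; omega

theorem le_ncard_of_dbDirDominating {S : Set (dbVtx d 3 (m + 3))} (hS : dbDirDominating S) :
    d * (d - 2) ^ (m + 1) ≤ S.ncard := by
  have hcard := card_le_ncard_mul_of_covers _ hS ncard_setOf_eq_or_dbShift_le
  rw [card_dbVtx_three (m + 1)] at hcard
  rcases Nat.lt_or_ge d 2 with hd | hd
  · simp [Nat.sub_eq_zero_of_le hd.le]
  · exact Nat.le_of_mul_le_mul_right (by linarith) (by omega : 0 < d - 1)

end Neighbourhood

theorem dbDirDominating_setOf_snd_eq {d m : ℕ} {σ : Fin d → Fin d} (hσ : Involutive σ)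
    (hσ' : ∀ a, σ a ≠ a) : dbDirDominating {v : dbVtx d 3 (m + 2) | v.1 1 = σ (v.1 0)} := by
  rintro ⟨x, hx⟩
  by_cases hx1 : x 1 = σ (x 0)
  · exact ⟨_, hx1, Or.inl rfl⟩
  have hy : dbConstrained d 3 (m + 2) (Fin.cons (σ (x 0)) (Fin.init x)) := by
    refine (dbConstrained_cons_iff _ _).2 ⟨hx.init, fun j hj => ?_⟩
    obtain hj | hj : j.castSucc = 0 ∨ j.castSucc = 1 := by
      simp only [Fin.ext_iff, Fin.val_castSucc, Fin.val_zero, Fin.val_one]; omega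
    all_goals change σ (x 0) ≠ x j.castSucc; rw [hj]
    exacts [hσ' (x 0), Ne.symm hx1]
  refine ⟨⟨_, hy⟩, ?_, Or.inr fun i hi => ?_⟩
  · show (Fin.cons (σ (x 0)) (Fin.init x) : Fin (m + 2) → Fin d) 1 =
      σ ((Fin.cons (σ (x 0)) (Fin.init x) : Fin (m + 2) → Fin d) 0)
    simp [Fin.cons_one, Fin.init, hσ (x 0)]
  · exact (Fin.cons_succ (α := fun _ => Fin d) (σ (x 0)) (Fin.init x) ⟨i, by omega⟩).symm

theorem Fin.exists_involutive_forall_ne {d : ℕ} (hd : Even d) :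
    ∃ σ : Fin d → Fin d, Involutive σ ∧ ∀ a, σ a ≠ a := by
  obtain ⟨k, rfl⟩ := hd
  refine ⟨fun a => finSumFinEquiv (finSumFinEquiv.symm a).swap, fun a => by simp, fun a h => ?_⟩
  have h' := (Equiv.symm_apply_eq _).2 h.symm
  generalize finSumFinEquiv.symm a = b at h'
  cases b <;> simp at h'

theorem gammaDir_three_even_general (d n : ℕ) (hn : 4 ≤ n) (hev : Even d) :
    gammaDir d 3 n = d * (d - 2) ^ (n - 2) := by
  obtain ⟨m, rfl⟩ : ∃ m, n = m + 3 := ⟨n - 3, by omega⟩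
  obtain ⟨σ, hσ, hσ'⟩ := Fin.exists_involutive_forall_ne hev
  refine IsLeast.csInf_eq ⟨⟨_, Set.toFinite _, ncard_setOf_snd_eq hσ' (m + 1),
    dbDirDominating_setOf_snd_eq hσ hσ'⟩, ?_⟩
  rintro k ⟨S, -, rfl, hS⟩
  exact le_ncard_of_dbDirDominating hS

/-- for `d` even, `γ(cDB⁺(d,3,n)) = d * (d-2)^(n-2)`. -/
theorem gammaDir_three_even (d n : ℕ) (hd : 3 ≤ d) (hn : 4 ≤ n) (hev : Even d) :
    gammaDir d 3 n = d * (d - 2) ^ (n - 2) :=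
  gammaDir_three_even_general d n hn hev
end
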